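/- arXiv:2202.10653 — 6 statements merged into one kernel-verified Lean document; each statement's English description precedes it below -/
import Mathlib

section
/- If a multiplicative function f : ℕ → ℂ satisfies f(x² + xy + y²) = f(x)² + f(x)f(y) + f(y)² for all positive integers x, y, then f(n²) = f(n)² for every positive integer n not divisible by 3. -/
section FunctionalEquation

variable {f : ℕ → ℂ}

theorem apply_three_mul_sq_of_functional_eq
    (hfe : ∀ x y : ℕ, 0 < x → 0 < y →
      f (x ^ 2 + y ^ 2 + x * y) = f x ^ 2 + f x * f y + f y ^ 2)
    {n : ℕ} (hn : 0 < n) : f (3 * n ^ 2) = 3 * f n ^ 2 := by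
  have h := hfe n n hn hn
  rw [show n ^ 2 + n ^ 2 + n * n = 3 * n ^ 2 by ring] at h
  linear_combination h

theorem apply_three_of_functional_eq (h1 : f 1 = 1)
    (hfe : ∀ x y : ℕ, 0 < x → 0 < y →
      f (x ^ 2 + y ^ 2 + x * y) = f x ^ 2 + f x * f y + f y ^ 2) : f 3 = 3 := by
  simpa [h1] using apply_three_mul_sq_of_functional_eq hfe one_pos

end FunctionalEquation

theorem stmt_1 (f : ℕ → ℂ) (h1 : f 1 = 1)
    (hmul : ∀ m n : ℕ, Nat.gcd m n = 1 → f (m * n) = f m * f n)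
    (hfe : ∀ x y : ℕ, 0 < x → 0 < y →
      f (x ^ 2 + y ^ 2 + x * y) = f x ^ 2 + f x * f y + f y ^ 2) :
    ∀ n : ℕ, 0 < n → ¬ (3 ∣ n) → f (n ^ 2) = f n ^ 2 := by
  intro n hn h3
  have hcop : Nat.gcd 3 (n ^ 2) = 1 :=
    ((Nat.Prime.coprime_iff_not_dvd Nat.prime_three).2 h3).pow_right 2
  have h := apply_three_mul_sq_of_functional_eq hfe hn
  rw [hmul 3 _ hcop, apply_three_of_functional_eq h1 hfe] at h
  linear_combination h / 3
end

section
/- If a multiplicative function f : ℕ → ℂ satisfies f(x² + xy + y²) = f(x)² + f(x)f(y) + f(y)² for all positive integers x, y, then f(2) = 2, f(5) = 5, f(7) = 7, and f(13) = 13. -/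
/-!
Writing `t = f 2`, the equation at small arguments gives `f 3 = 3`, `f 13 = 13`,
`f 7 = t² + t + 1` and `f 4 = t²` (from `12 = 2² + 2² + 2·2 = 3·4`). Evaluating `f 21` and
`f 57` in two ways, once through the equation (`21 = 1 + 4² + 4`, `57 = 1 + 7² + 7`) and once
through multiplicativity (`21 = 3·7`, `57 = 3·19` with `19 = 2² + 3² + 2·3`), yields two quartic
equations for `t` whose only common root is `2`. Then `f 7 = 7`, and comparing
`39 = 2² + 5² + 2·5 = 3·13` with `91 = 5² + 6² + 5·6 = 7·13` gives a linear equation for `f 5`.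
-/

def MultiplicativeOnCoprime (f : ℕ → ℂ) : Prop :=
  ∀ m n : ℕ, Nat.gcd m n = 1 → f (m * n) = f m * f n

def PreservesLoeschianForm (f : ℕ → ℂ) : Prop :=
  ∀ x y : ℕ, 0 < x → 0 < y → f (x ^ 2 + y ^ 2 + x * y) = f x ^ 2 + f x * f y + f y ^ 2

theorem eq_two_of_quartics {K : Type*} [Field K] [CharZero K] {t : K}
    (hP : t ^ 4 - 2 * t ^ 2 - 3 * t - 2 = 0)
    (hQ : t ^ 4 + 2 * t ^ 3 + t ^ 2 - 6 * t - 24 = 0) : t = 2 := by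
  -- a Bézout identity: the two quartics have greatest common divisor `t - 2`
  linear_combination (-(1 : K) / 61 + 3 / 122 * t - 7 / 366 * t ^ 2) * hP +
    ((31 : K) / 366 - 23 / 366 * t + 7 / 366 * t ^ 2) * hQ

namespace PreservesLoeschianForm

variable {f : ℕ → ℂ}

theorem apply_three (hfe : PreservesLoeschianForm f) (h1 : f 1 = 1) : f 3 = 3 := by
  have h := hfe 1 1 one_pos one_pos
  norm_num [h1] at h
  linear_combination h

theorem apply_thirteen (hfe : PreservesLoeschianForm f) (h1 : f 1 = 1) : f 13 = 13 := by
  have h := hfe 1 3 one_pos (by norm_num)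
  norm_num [h1, hfe.apply_three h1] at h
  linear_combination h

theorem apply_seven_eq (hfe : PreservesLoeschianForm f) (h1 : f 1 = 1) :
    f 7 = 1 + f 2 + f 2 ^ 2 := by
  have h := hfe 1 2 one_pos (by norm_num)
  norm_num [h1] at h
  linear_combination h

theorem apply_four (hfe : PreservesLoeschianForm f) (hmul : MultiplicativeOnCoprime f)
    (h1 : f 1 = 1) : f 4 = f 2 ^ 2 := by
  have h12 := hfe 2 2 (by norm_num) (by norm_num)
  have h12' := hmul 3 4 (by norm_num)
  norm_num [hfe.apply_three h1] at h12 h12'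
  linear_combination (h12 - h12') / 3

theorem quartic_of_twenty_one (hfe : PreservesLoeschianForm f)
    (hmul : MultiplicativeOnCoprime f) (h1 : f 1 = 1) :
    f 2 ^ 4 - 2 * f 2 ^ 2 - 3 * f 2 - 2 = 0 := by
  have h21 := hfe 1 4 one_pos (by norm_num)
  have h21' := hmul 3 7 (by norm_num)
  norm_num [h1, hfe.apply_three h1, hfe.apply_four hmul h1] at h21 h21'
  linear_combination h21' - h21 + 3 * hfe.apply_seven_eq h1

theorem quartic_of_fifty_seven (hfe : PreservesLoeschianForm f)
    (hmul : MultiplicativeOnCoprime f) (h1 : f 1 = 1) :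
    f 2 ^ 4 + 2 * f 2 ^ 3 + f 2 ^ 2 - 6 * f 2 - 24 = 0 := by
  have h7 := hfe.apply_seven_eq h1
  have h19 := hfe 2 3 (by norm_num) (by norm_num)
  have h57 := hfe 1 7 one_pos (by norm_num)
  have h57' := hmul 3 19 (by norm_num)
  norm_num [h1, hfe.apply_three h1] at h19 h57 h57'
  linear_combination h57' - h57 + 3 * h19 - (2 + f 2 + f 2 ^ 2 + f 7) * h7

theorem apply_two (hfe : PreservesLoeschianForm f) (hmul : MultiplicativeOnCoprime f)
    (h1 : f 1 = 1) : f 2 = 2 :=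
  eq_two_of_quartics (hfe.quartic_of_twenty_one hmul h1) (hfe.quartic_of_fifty_seven hmul h1)

theorem apply_seven (hfe : PreservesLoeschianForm f) (hmul : MultiplicativeOnCoprime f)
    (h1 : f 1 = 1) : f 7 = 7 := by
  rw [hfe.apply_seven_eq h1, hfe.apply_two hmul h1]
  norm_num

theorem apply_five (hfe : PreservesLoeschianForm f) (hmul : MultiplicativeOnCoprime f)
    (h1 : f 1 = 1) : f 5 = 5 := by
  have h6 := hmul 2 3 (by norm_num)
  have h39 := hfe 2 5 (by norm_num) (by norm_num)
  have h39' := hmul 3 13 (by norm_num)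
  have h91 := hfe 5 6 (by norm_num) (by norm_num)
  have h91' := hmul 7 13 (by norm_num)
  norm_num [hfe.apply_two hmul h1, hfe.apply_three h1, hfe.apply_thirteen h1,
    hfe.apply_seven hmul h1] at h6 h39 h39' h91 h91'
  rw [h6] at h91
  linear_combination (h39 - h39' - h91 + h91') / 4

end PreservesLoeschianForm

theorem stmt_2 (f : ℕ → ℂ) (h1 : f 1 = 1)
    (hmul : ∀ m n : ℕ, Nat.gcd m n = 1 → f (m * n) = f m * f n)
    (hfe : ∀ x y : ℕ, 0 < x → 0 < y →
      f (x ^ 2 + y ^ 2 + x * y) = f x ^ 2 + f x * f y + f y ^ 2) :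
    f 2 = 2 ∧ f 5 = 5 ∧ f 7 = 7 ∧ f 13 = 13 := by
  have hfe : PreservesLoeschianForm f := hfe
  exact ⟨hfe.apply_two hmul h1, hfe.apply_five hmul h1, hfe.apply_seven hmul h1,
    hfe.apply_thirteen h1⟩
end

section
/- A prime p satisfies p ≡ 2 (mod 3) if and only if p cannot be represented as x² − xy + y² with positive integers x, y other than trivially (i.e., p ≠ x² − xy + y² for all positive integers x, y except when the value is not p). -/
set_option maxHeartbeats 1000000

lemma aux_rep (p : ℕ) (a b : ℤ) (ha : 0 < a) (hb : 0 < b)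
    (h : (p : ℤ) = a ^ 2 - a * b + b ^ 2) :
    ∃ x y : ℕ, 0 < x ∧ 0 < y ∧ p = x ^ 2 + y ^ 2 - x * y := by
  refine ⟨a.toNat, b.toNat, by omega, by omega, ?_⟩
  have hxy : a.toNat * b.toNat ≤ a.toNat ^ 2 + b.toNat ^ 2 := by
    rcases le_total a.toNat b.toNat with h' | h' <;> nlinarith
  have h2 : ((a.toNat : ℤ)) = a := Int.toNat_of_nonneg ha.le
  have h3 : ((b.toNat : ℤ)) = b := Int.toNat_of_nonneg hb.le
  zify [hxy]
  rw [h2, h3]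
  linarith

lemma main_rep (p : ℕ) (hp : p.Prime) (h3 : p % 3 = 1) :
    ∃ x y : ℕ, 0 < x ∧ 0 < y ∧ p = x ^ 2 + y ^ 2 - x * y := by
  haveI : Fact p.Prime := ⟨hp⟩
  have hp2 : 2 ≤ p := hp.two_le
  -- find u with u^2 + u + 1 = 0 in ZMod p
  have hcard : Fintype.card (ZMod p)ˣ = p - 1 := by
    rw [ZMod.card_units_eq_totient, Nat.totient_prime hp]
  have hdvd : 3 ∣ Fintype.card (ZMod p)ˣ := by rw [hcard]; omega
  obtain ⟨ζ, hζ⟩ := exists_prime_orderOf_dvd_card 3 hdvd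
  set u : ZMod p := (ζ : ZMod p) with hu_def
  have hu3 : u ^ 3 = 1 := by
    have h1 : ζ ^ 3 = 1 := by rw [← hζ]; exact pow_orderOf_eq_one ζ
    have := congrArg (fun w : (ZMod p)ˣ => (w : ZMod p)) h1
    simpa using this
  have hune : u ≠ 1 := by
    intro h
    have h1 : ζ = 1 := Units.ext h
    rw [h1, orderOf_one] at hζ
    omega
  have hu : u ^ 2 + u + 1 = 0 := by
    have h0 : (u - 1) * (u ^ 2 + u + 1) = u ^ 3 - 1 := by ring
    rw [hu3, sub_self] at h0
    rcases mul_eq_zero.mp h0 with h1 | h1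
    · exact absurd (sub_eq_zero.mp h1) hune
    · exact h1
  -- pigeonhole
  set m := Nat.sqrt p with hm
  have hmlt : p < (m + 1) * (m + 1) := Nat.lt_succ_sqrt p
  have hm2 : m * m < p := by
    have hle : m * m ≤ p := Nat.sqrt_le p
    rcases hle.lt_or_eq with h | h
    · exact h
    · exfalso
      have hmd : m ∣ p := ⟨m, h.symm⟩
      rcases (hp.eq_one_or_self_of_dvd m hmd) with h1 | h1
      · rw [h1] at h; omega
      · rw [h1] at h; nlinarith
  have hcard2 : Fintype.card (ZMod p) < Fintype.card (Fin (m + 1) × Fin (m + 1)) := by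
    simp [ZMod.card]
    omega
  obtain ⟨q1, q2, hne, hfe⟩ := Fintype.exists_ne_map_eq_of_card_lt
    (fun q : Fin (m + 1) × Fin (m + 1) => ((q.1 : ℕ) : ZMod p) - u * ((q.2 : ℕ) : ZMod p))
    hcard2
  set x : ℤ := ((q1.1 : ℕ) : ℤ) - ((q2.1 : ℕ) : ℤ) with hx_def
  set y : ℤ := ((q1.2 : ℕ) : ℤ) - ((q2.2 : ℕ) : ℤ) with hy_def
  have hcast : ((x : ZMod p)) = u * ((y : ZMod p)) := by
    simp only [hx_def, hy_def]
    push_cast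
    simp only [sub_eq_iff_eq_add] at hfe ⊢
    linear_combination hfe
  have hxb1 : -(m : ℤ) ≤ x ∧ x ≤ m := by
    have h1 := q1.1.isLt
    have h2 := q2.1.isLt
    constructor <;> [skip; skip] <;> simp only [hx_def] <;> omega
  have hyb1 : -(m : ℤ) ≤ y ∧ y ≤ m := by
    have h1 := q1.2.isLt
    have h2 := q2.2.isLt
    constructor <;> [skip; skip] <;> simp only [hy_def] <;> omega
  have hne' : x ≠ 0 ∨ y ≠ 0 := by
    by_contra hc
    push_neg at hc
    apply hne
    have e1 : q1.1 = q2.1 := Fin.ext (by have := hc.1; simp only [hx_def] at this; omega)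
    have e2 : q1.2 = q2.2 := Fin.ext (by have := hc.2; simp only [hy_def] at this; omega)
    exact Prod.ext e1 e2
  have hdvdN : (p : ℤ) ∣ x ^ 2 + x * y + y ^ 2 := by
    rw [← ZMod.intCast_zmod_eq_zero_iff_dvd]
    have hc : ((x ^ 2 + x * y + y ^ 2 : ℤ) : ZMod p)
        = (x : ZMod p) ^ 2 + (x : ZMod p) * (y : ZMod p) + (y : ZMod p) ^ 2 := by
      push_cast; ring
    rw [hc, hcast]
    linear_combination ((y : ℤ) : ZMod p) ^ 2 * hu
  have hNpos : 0 < x ^ 2 + x * y + y ^ 2 := by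
    rcases hne' with hx0 | hy0
    · nlinarith [pow_two_pos_of_ne_zero hx0, sq_nonneg (2 * y + x)]
    · nlinarith [pow_two_pos_of_ne_zero hy0, sq_nonneg (2 * x + y)]
  have hmp : (m : ℤ) * m < p := by exact_mod_cast hm2
  obtain ⟨ha1, ha2⟩ := hxb1
  obtain ⟨hb1, hb2⟩ := hyb1
  have hx2m : x ^ 2 ≤ (m : ℤ) * m := by nlinarith
  have hy2m : y ^ 2 ≤ (m : ℤ) * m := by nlinarith
  have hNlt : x ^ 2 + x * y + y ^ 2 < 3 * p := by
    nlinarith [sq_nonneg (x - y)]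
  obtain ⟨k, hk⟩ := hdvdN
  have hppos : (0 : ℤ) < p := by exact_mod_cast hp.pos
  have hk12 : k = 1 ∨ k = 2 := by
    have hkpos : 0 < k := by nlinarith
    have hklt : k < 3 := by nlinarith
    omega
  have hk1 : k = 1 := by
    rcases hk12 with h | h
    · exact h
    · exfalso
      subst h
      have hmod : ((x ^ 2 + x * y + y ^ 2 : ℤ) : ZMod 3) = 2 := by
        rw [hk]
        push_cast
        have : ((p : ℕ) : ZMod 3) = 1 := by
          rw [← ZMod.natCast_mod, h3]; rfl
        rw [this]; ring
      have hall : ∀ a b : ZMod 3, a ^ 2 + a * b + b ^ 2 ≠ 2 := by decide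
      apply hall ((x : ZMod 3)) ((y : ZMod 3))
      rw [← hmod]; push_cast; ring
  rw [hk1, mul_one] at hk
  have hpeq : (p : ℤ) = x ^ 2 + x * y + y ^ 2 := hk.symm
  have hx0 : x ≠ 0 := by
    intro h
    rw [h] at hpeq
    nlinarith
  have hy0 : y ≠ 0 := by
    intro h
    rw [h] at hpeq
    nlinarith
  rcases hx0.lt_or_gt with hxneg | hxpos
  · rcases hy0.lt_or_gt with hyneg | hypos
    · exact aux_rep p (-x - y) (-y) (by nlinarith) (by linarith) (by linear_combination hpeq)
    · exact aux_rep p (-x) y (by linarith) hypos (by linear_combination hpeq)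
  · rcases hy0.lt_or_gt with hyneg | hypos
    · exact aux_rep p x (-y) hxpos (by linarith) (by linear_combination hpeq)
    · exact aux_rep p (x + y) y (by linarith) hypos (by linear_combination hpeq)

theorem stmt_12 (p : ℕ) (hp : p.Prime) :
    p % 3 = 2 ↔ ¬ ∃ x y : ℕ, 0 < x ∧ 0 < y ∧ p = x ^ 2 + y ^ 2 - x * y := by
  constructor
  · rintro h2 ⟨x, y, hx, hy, hxy⟩
    have hle : x * y ≤ x ^ 2 + y ^ 2 := by
      rcases le_total x y with h' | h' <;> nlinarith
    zify [hle] at hxy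
    have hmod : ((p : ℕ) : ZMod 3) = 2 := by
      rw [← ZMod.natCast_mod, h2]; rfl
    have hall : ∀ a b : ZMod 3, a ^ 2 + b ^ 2 - a * b ≠ 2 := by decide
    apply hall ((x : ℕ) : ZMod 3) ((y : ℕ) : ZMod 3)
    have := congrArg (fun z : ℤ => ((z : ℤ) : ZMod 3)) hxy
    push_cast at this
    rw [← this]
    exact_mod_cast hmod
  · intro h
    by_contra hne
    have h01 : p % 3 = 0 ∨ p % 3 = 1 := by omega
    rcases h01 with h0 | h1
    · have h3d : (3 : ℕ) ∣ p := by omega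
      have hp3 : p = 3 := ((Nat.prime_dvd_prime_iff_eq Nat.prime_three hp).mp h3d).symm
      exact h ⟨1, 2, by norm_num, by norm_num, by rw [hp3]; norm_num⟩
    · exact h (main_rep p hp h1)
end

section
/- For a prime p with p ≡ 2 (mod 3), the function f_p : ℕ → ℂ defined by f_p(n) = 0 if p ∣ n and f_p(n) = 1 otherwise is multiplicative and satisfies f_p(x² − xy + y²) = f_p(x)² − f_p(x)f_p(y) + f_p(y)² for all positive integers x, y. -/
/-!
Modulo a prime `p ≡ 2 (mod 3)` cubing is a bijection, since `3 ∤ p - 1`. If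
`x² - xy + y² ≡ 0` then `x³ + y³ = (x + y)(x² - xy + y²) ≡ 0`, so `x ≡ -y`, and then
`3y² ≡ 0` forces `x ≡ y ≡ 0`. Hence `p ∣ x² - xy + y²` exactly when `p ∣ x` and `p ∣ y`,
which is the identity for `f_p`, while multiplicativity of `f_p` is Euclid's lemma.
-/

open Function

theorem eq_zero_and_eq_zero_of_sq_sub_mul_add_sq_eq_zero {R : Type*} [CommRing R]
    [NoZeroDivisors R] (h3 : (3 : R) ≠ 0) (hcube : Injective fun x : R => x ^ 3) {x y : R}
    (h : x ^ 2 - x * y + y ^ 2 = 0) : x = 0 ∧ y = 0 := by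
  have hxy : x = -y := hcube <| by
    show x ^ 3 = (-y) ^ 3
    linear_combination (x + y) * h
  subst hxy
  have hy : y = 0 := by
    have : (3 : R) * y ^ 2 = 0 := by linear_combination h
    simpa [h3] using this
  simp [hy]

namespace FiniteField

variable {K : Type*} [Field K] [Fintype K]

theorem pow_three_injective (hK : Fintype.card K % 3 = 2) : Injective fun x : K => x ^ 3 := by
  set q := Fintype.card K
  -- `x ↦ x ^ ((2q - 1) / 3)` inverts cubing, as `x ^ (2q - 1) = x ^ q * x ^ (q - 1) = x`.
  refine LeftInverse.injective (g := fun x : K => x ^ ((2 * q - 1) / 3)) fun x => ?_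
  have hq : 1 ≤ q := Fintype.card_pos
  have hexp : 3 * ((2 * q - 1) / 3) = q + (q - 1) := by omega
  by_cases hx : x = 0
  · simp [hx, zero_pow (show (2 * q - 1) / 3 ≠ 0 by omega)]
  · show (x ^ 3) ^ _ = x
    rw [← pow_mul, hexp, pow_add, pow_card, pow_card_sub_one_eq_one x hx, mul_one]

theorem three_ne_zero_of_card_mod_three_eq_two (hK : Fintype.card K % 3 = 2) : (3 : K) ≠ 0 := by
  intro h3
  have hcard : (Fintype.card K : K) = 3 * (Fintype.card K / 3 : ℕ) + 2 := by
    conv_lhs => rw [← Nat.div_add_mod (Fintype.card K) 3, hK]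
    push_cast; ring
  rw [cast_card_eq_zero, h3, zero_mul, zero_add] at hcard
  have : (1 : K) = 0 := by linear_combination h3 + hcard
  exact one_ne_zero this

theorem sq_sub_mul_add_sq_eq_zero_iff (hK : Fintype.card K % 3 = 2) {x y : K} :
    x ^ 2 - x * y + y ^ 2 = 0 ↔ x = 0 ∧ y = 0 := by
  refine ⟨eq_zero_and_eq_zero_of_sq_sub_mul_add_sq_eq_zero
    (three_ne_zero_of_card_mod_three_eq_two hK) (pow_three_injective hK), ?_⟩
  rintro ⟨rfl, rfl⟩
  ring

end FiniteField

theorem Nat.Prime.dvd_sq_add_sq_sub_mul_iff {p : ℕ} (hp : p.Prime) (hmod : p % 3 = 2)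
    {x y : ℕ} : p ∣ x ^ 2 + y ^ 2 - x * y ↔ p ∣ x ∧ p ∣ y := by
  have := Fact.mk hp
  have hle : x * y ≤ x ^ 2 + y ^ 2 :=
    (Nat.le_mul_of_pos_left _ two_pos).trans (by simpa [mul_assoc] using two_mul_le_add_sq x y)
  simp only [← ZMod.natCast_eq_zero_iff, Nat.cast_sub hle, Nat.cast_add, Nat.cast_mul,
    Nat.cast_pow]
  rw [← FiniteField.sq_sub_mul_add_sq_eq_zero_iff (by rwa [ZMod.card])]
  ring_nf

theorem stmt_13 (p : ℕ) (hp : p.Prime) (hmod : p % 3 = 2)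
    (f : ℕ → ℂ) (hf : ∀ n, f n = if p ∣ n then 0 else 1) :
    (f 1 = 1 ∧ ∀ m n : ℕ, Nat.gcd m n = 1 → f (m * n) = f m * f n) ∧
    ∀ x y : ℕ, 0 < x → 0 < y →
      f (x ^ 2 + y ^ 2 - x * y) = f x ^ 2 - f x * f y + f y ^ 2 := by
  simp only [hf, hp.dvd_mul, hp.dvd_sq_add_sq_sub_mul_iff hmod, Nat.dvd_one, hp.ne_one]
  refine ⟨⟨rfl, fun m n _ => ?_⟩, fun x y _ _ => ?_⟩ <;> split_ifs <;> simp_all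
end

section
/- Let f : ℕ → ℂ be multiplicative and satisfy f(x² − xy + y²) = f(x)² − f(x)f(y) + f(y)² for all positive integers x, y. If f(2) = 0, then f(2k) = 0 for all k ≥ 1 and f(2k+1) = 1 for all k ≥ 0; i.e., f = f_2. -/
/-!
Evaluating the functional equation at `(x, x)` gives `f (x²) = f x ²`, so `f 4 = 0`. At `(2, 2k)`
the argument is `4 (k² - k + 1)` with `k² - k + 1` odd, so multiplicativity gives
`f (2k)² = f 4 · f (k² - k + 1) = 0`. Finally `n² - n + 1` is the value of the form both at
`(n, 1)` and at `(n, n - 1)`; when `f (n - 1) = 0` comparing the two evaluations forces `f n = 1`.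
-/

namespace Nat

theorem sq_add_sq_sub_mul_mul_left (a x y : ℕ) :
    (a * x) ^ 2 + (a * y) ^ 2 - a * x * (a * y) = a ^ 2 * (x ^ 2 + y ^ 2 - x * y) := by
  rw [Nat.mul_sub]
  ring_nf

theorem odd_one_sq_add_sq_sub_mul (k : ℕ) : Odd (1 ^ 2 + k ^ 2 - 1 * k) := by
  have hk : k ≤ k ^ 2 := Nat.le_self_pow two_ne_zero k
  have heven : Even (k ^ 2 - k) := by
    rw [Nat.even_sub hk]
    simp [Nat.even_pow]
  rw [one_pow, one_mul, Nat.add_sub_assoc hk, add_comm]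
  exact heven.add_one

theorem sq_add_one_sq_sub_mul_one (n : ℕ) :
    (n + 1) ^ 2 + 1 ^ 2 - (n + 1) * 1 = (n + 1) ^ 2 + n ^ 2 - (n + 1) * n := by
  have h₁ : (n + 1) ^ 2 + 1 ^ 2 = (n + 1) * 1 + (n ^ 2 + n + 1) := by ring
  have h₂ : (n + 1) ^ 2 + n ^ 2 = (n + 1) * n + (n ^ 2 + n + 1) := by ring
  rw [h₁, h₂, Nat.add_sub_cancel_left, Nat.add_sub_cancel_left]

end Nat

section FunctionalEquation

variable {R : Type*} [CommRing R] {f : ℕ → R}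

theorem map_sq_of_fe (hfe : ∀ x y : ℕ, 0 < x → 0 < y →
      f (x ^ 2 + y ^ 2 - x * y) = f x ^ 2 - f x * f y + f y ^ 2)
    {x : ℕ} (hx : 0 < x) : f (x ^ 2) = f x ^ 2 := by
  have h := hfe x x hx hx
  rw [← sq, Nat.add_sub_cancel] at h
  linear_combination h

theorem map_two_mul_eq_zero_of_fe [NoZeroDivisors R]
    (hmul : ∀ m n : ℕ, Nat.gcd m n = 1 → f (m * n) = f m * f n)
    (hfe : ∀ x y : ℕ, 0 < x → 0 < y →
      f (x ^ 2 + y ^ 2 - x * y) = f x ^ 2 - f x * f y + f y ^ 2)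
    (h2 : f 2 = 0) {k : ℕ} (hk : 0 < k) : f (2 * k) = 0 := by
  have hcop : Nat.Coprime (2 ^ 2) (1 ^ 2 + k ^ 2 - 1 * k) :=
    (Nat.coprime_two_left.mpr (Nat.odd_one_sq_add_sq_sub_mul k)).pow_left 2
  have h := hfe (2 * 1) (2 * k) (by norm_num) (by omega)
  rw [Nat.sq_add_sq_sub_mul_mul_left, hmul _ _ hcop, map_sq_of_fe hfe two_pos, mul_one, h2] at h
  have hsq : f (2 * k) ^ 2 = 0 := by linear_combination -h
  exact pow_eq_zero_iff two_ne_zero |>.mp hsq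

theorem map_succ_eq_one_of_fe (h1 : f 1 = 1)
    (hfe : ∀ x y : ℕ, 0 < x → 0 < y →
      f (x ^ 2 + y ^ 2 - x * y) = f x ^ 2 - f x * f y + f y ^ 2)
    {n : ℕ} (hn : 0 < n) (h : f n = 0) : f (n + 1) = 1 := by
  have h₁ := hfe (n + 1) 1 n.succ_pos one_pos
  have h₂ := hfe (n + 1) n n.succ_pos hn
  rw [Nat.sq_add_one_sq_sub_mul_one, h₂, h, h1] at h₁
  linear_combination h₁

end FunctionalEquation

theorem stmt_16 (f : ℕ → ℂ) (h1 : f 1 = 1)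
    (hmul : ∀ m n : ℕ, Nat.gcd m n = 1 → f (m * n) = f m * f n)
    (hfe : ∀ x y : ℕ, 0 < x → 0 < y →
      f (x ^ 2 + y ^ 2 - x * y) = f x ^ 2 - f x * f y + f y ^ 2)
    (h2 : f 2 = 0) :
    (∀ k : ℕ, 1 ≤ k → f (2 * k) = 0) ∧ (∀ k : ℕ, f (2 * k + 1) = 1) := by
  have heven : ∀ k : ℕ, 1 ≤ k → f (2 * k) = 0 := fun k hk =>
    map_two_mul_eq_zero_of_fe hmul hfe h2 hk
  refine ⟨heven, fun k => ?_⟩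
  rcases k.eq_zero_or_pos with rfl | hk
  · simpa using h1
  · exact map_succ_eq_one_of_fe h1 hfe (by omega) (heven k hk)
end

section
/- Let f : ℕ → ℂ be multiplicative with f(n²) = f(n)² for all n, satisfying f(x² − xy + y²) = f(x)² − f(x)f(y) + f(y)² for all positive integers x, y. If p is a prime with f(p) = 0, then f(pℓ) = 0 for every positive integer ℓ. -/
/-! Either `p ∤ ℓ`, and then `f (p ℓ) = f p f ℓ = 0`, or `p ∣ ℓ`, and then the functional equation
at `(p, p ℓ)` together with `p² + (pℓ)² − p·pℓ = p²(ℓ² − ℓ + 1)`, where `ℓ² − ℓ + 1 ≡ 1 (mod p)`,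
gives `f (p ℓ)² = f p ^ 2 * f (ℓ² − ℓ + 1) = 0`. -/

theorem Nat.sq_add_mul_sq_sub_mul (p ℓ : ℕ) :
    p ^ 2 + (p * ℓ) ^ 2 - p * (p * ℓ) = p ^ 2 * (ℓ ^ 2 - ℓ + 1) := by
  have hℓ : ℓ ≤ ℓ ^ 2 := Nat.le_self_pow two_ne_zero ℓ
  have hp : p * (p * ℓ) ≤ p ^ 2 + (p * ℓ) ^ 2 := by nlinarith
  zify [hℓ, hp]
  ring

theorem Nat.coprime_sq_sub_add_one_of_dvd {d ℓ : ℕ} (h : d ∣ ℓ) :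
    Nat.Coprime d (ℓ ^ 2 - ℓ + 1) := by
  obtain ⟨k, rfl⟩ := h
  rw [sq, ← Nat.mul_sub_one, mul_assoc, Nat.coprime_mul_left_add_right]
  exact Nat.coprime_one_right d

theorem stmt_17_general (f : ℕ → ℂ)
    (hmul : ∀ m n : ℕ, Nat.gcd m n = 1 → f (m * n) = f m * f n)
    (hsq : ∀ n : ℕ, f (n ^ 2) = f n ^ 2)
    (hfe : ∀ x y : ℕ, 0 < x → 0 < y →
      f (x ^ 2 + y ^ 2 - x * y) = f x ^ 2 - f x * f y + f y ^ 2)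
    (p : ℕ) (hp : p.Prime) (hfp : f p = 0) :
    ∀ ℓ : ℕ, 0 < ℓ → f (p * ℓ) = 0 := by
  intro ℓ hℓ
  rcases Nat.coprime_or_dvd_of_prime hp ℓ with hcop | hdvd
  · rw [hmul p ℓ hcop, hfp, zero_mul]
  · have hcop := (Nat.coprime_sq_sub_add_one_of_dvd hdvd).pow_left 2
    have h := hfe p (p * ℓ) hp.pos (Nat.mul_pos hp.pos hℓ)
    rw [Nat.sq_add_mul_sq_sub_mul, hmul _ _ hcop, hsq, hfp] at h
    exact pow_eq_zero_iff two_ne_zero |>.mp (by linear_combination -h)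

theorem stmt_17 (f : ℕ → ℂ) (h1 : f 1 = 1)
    (hmul : ∀ m n : ℕ, Nat.gcd m n = 1 → f (m * n) = f m * f n)
    (hsq : ∀ n : ℕ, f (n ^ 2) = f n ^ 2)
    (hfe : ∀ x y : ℕ, 0 < x → 0 < y →
      f (x ^ 2 + y ^ 2 - x * y) = f x ^ 2 - f x * f y + f y ^ 2)
    (p : ℕ) (hp : p.Prime) (hfp : f p = 0) :
    ∀ ℓ : ℕ, 0 < ℓ → f (p * ℓ) = 0 :=
  stmt_17_general f hmul hsq hfe p hp hfp
end
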